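/- Approximation template: if g : Y → ℝ is continuous and H is a path deformation retraction of X in Y, then d_I(Rb(Y,g), Rb(X, g|_X)) ≤ ‖g − g∘h₁‖_∞, where the distance is the interleaving distance between the Reeb precosheaves of the Reeb graphs. -/

import Mathlib

/-!
The Reeb precosheaf of `f` is naturally isomorphic to that of the induced function on the Reeb
quotient: over an open set `U`, the quotient map restricted to `f ⁻¹' U` is again a quotient map,
and its fibres, the Reeb classes, are connected. So it suffices to `δ`-interleave `𝒟(Y, g)` and
`𝒟(A, g|_A)` for `δ = ‖g - g ∘ h₁‖_∞`. The retraction `h₁ : Y → A` and the inclusion `A → Y` move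
`g` by at most `δ`, their composite on `A` is the identity, and for `y ∈ Y` the track
`t ↦ H (y, t)` is a connected set from `y` to `h₁ y` on which `g` stays within `2δ` of `g y`,
because `h₁ (H (y, t)) = h₁ y`.
-/

open CategoryTheory Set
open scoped NNReal ENNReal

/-- The Reeb relation of `f : X → ℝ`: `x ∼_f y` iff `y` lies in the connected
component of `x` inside the level set `f ⁻¹' {f x}`. -/
def ReebRel {X : Type*} [TopologicalSpace X] (f : X → ℝ) (x y : X) : Prop :=
  y ∈ connectedComponentIn (f ⁻¹' {f x}) x

theorem ReebRel.apply_eq {X : Type*} [TopologicalSpace X] {f : X → ℝ} {x y : X}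
    (h : ReebRel f x y) : f x = f y :=
  (show f y = f x from connectedComponentIn_subset (f ⁻¹' {f x}) x h).symm

/-- The function induced by `f` on the Reeb quotient. -/
def reebTilde {X : Type*} [TopologicalSpace X] (f : X → ℝ) : Quot (ReebRel f) → ℝ :=
  Quot.lift f fun _ _ h => h.apply_eq

/-- The poset of nonempty open intervals `(a, b)` of `ℝ`, ordered by inclusion. -/
def RInt : Type := {p : ℝ × ℝ // p.1 < p.2}

namespace RInt

instance : Preorder RInt where
  le I J := J.1.1 ≤ I.1.1 ∧ I.1.2 ≤ J.1.2
  le_refl I := ⟨le_refl _, le_refl _⟩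
  le_trans I J K h h' := ⟨h'.1.trans h.1, h.2.trans h'.2⟩

/-- The underlying open interval `(a, b) ⊆ ℝ`. -/
def set (I : RInt) : Set ℝ := Set.Ioo I.1.1 I.1.2

theorem set_mono {I J : RInt} (h : I ≤ J) : I.set ⊆ J.set :=
  Set.Ioo_subset_Ioo h.1 h.2

/-- The `δ`-thickening `(a - δ, b + δ)` of the open interval `(a, b)`. -/
def widen (δ : ℝ≥0) (I : RInt) : RInt :=
  ⟨(I.1.1 - δ, I.1.2 + δ), by
    have h := I.2
    have h0 : (0 : ℝ) ≤ δ := δ.2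
    dsimp only
    linarith⟩

theorem widen_mono (δ : ℝ≥0) : Monotone (widen δ) := by
  intro I J h
  exact ⟨by dsimp [widen]; linarith [h.1], by dsimp [widen]; linarith [h.2]⟩

theorem le_widen (δ : ℝ≥0) (I : RInt) : I ≤ widen δ I := by
  have h0 : (0 : ℝ) ≤ δ := δ.2
  exact ⟨by dsimp [widen]; linarith, by dsimp [widen]; linarith⟩

end RInt

/-- The widening functor `ω_δ` sending `(a, b)` to `(a - δ, b + δ)`. -/
def widenFunctor (δ : ℝ≥0) : RInt ⥤ RInt := (RInt.widen_mono δ).functor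

/-- Two functors `C, D : Int ⥤ 𝒜` are `δ`-interleaved if there are natural
transformations `Φ : C ⟶ D ∘ ω_δ` and `Ψ : D ⟶ C ∘ ω_δ` whose composites are
the maps induced by the inclusions `I ⊆ ω_δ (ω_δ I) = ω_{2δ} I`. -/
def IsInterleaving {A : Type*} [Category A] (δ : ℝ≥0) (C D : RInt ⥤ A) : Prop :=
  ∃ (Φ : C ⟶ widenFunctor δ ⋙ D) (Ψ : D ⟶ widenFunctor δ ⋙ C),
    (∀ I : RInt, Φ.app I ≫ Ψ.app ((widenFunctor δ).obj I) =
      C.map (homOfLE ((RInt.le_widen δ I).trans (RInt.le_widen δ (RInt.widen δ I))))) ∧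
    (∀ I : RInt, Ψ.app I ≫ Φ.app ((widenFunctor δ).obj I) =
      D.map (homOfLE ((RInt.le_widen δ I).trans (RInt.le_widen δ (RInt.widen δ I)))))

/-- The interleaving distance between two functors on the poset of open intervals. -/
noncomputable def interleavingDist {A : Type*} [Category A] (C D : RInt ⥤ A) : ℝ≥0∞ :=
  ⨅ (δ : ℝ≥0) (_ : IsInterleaving δ C D), (δ : ℝ≥0∞)

/-- The Reeb precosheaf `𝒟(X, f)`, sending an open interval `I` to the set of
connected components of `f ⁻¹' I`, with maps induced by inclusions. -/
def reebPrecosheaf {X : Type u} [TopologicalSpace X] (f : X → ℝ) : RInt ⥤ Type u where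
  obj I := ConnectedComponents ↥(f ⁻¹' I.set)
  map {I J} h :=
    TypeCat.ofHom
      (continuous_inclusion (Set.preimage_mono (RInt.set_mono h.le))).connectedComponentsMap
  map_id I := by
    ext c
    obtain ⟨x, rfl⟩ := ConnectedComponents.surjective_coe c
    rfl
  map_comp {I J K} h h' := by
    ext c
    obtain ⟨x, rfl⟩ := ConnectedComponents.surjective_coe c
    rfl

open Topology

universe u

theorem IsPreconnected.preimage_subtypeVal {X : Type*} [TopologicalSpace X] {F S : Set X}
    (hS : IsPreconnected S) (hSF : S ⊆ F) : IsPreconnected (Subtype.val ⁻¹' S : Set F) := by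
  rwa [← IsInducing.subtypeVal.isPreconnected_image, Subtype.image_preimage_coe,
    inter_eq_right.2 hSF]

theorem ConnectedComponents.mk_eq_mk_of_isPreconnected {X : Type*} [TopologicalSpace X]
    {F S : Set X} (hS : IsPreconnected S) (hSF : S ⊆ F) {x y : X} (hx : x ∈ S) (hy : y ∈ S) :
    ConnectedComponents.mk (⟨x, hSF hx⟩ : F) = ConnectedComponents.mk (⟨y, hSF hy⟩ : F) :=
  ConnectedComponents.coe_eq_coe'.2 ((hS.preimage_subtypeVal hSF).subset_connectedComponent hy hx)

namespace RInt

theorem widen_widen (δ ε : ℝ≥0) (I : RInt) : widen δ (widen ε I) = widen (δ + ε) I := by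
  refine Subtype.ext (Prod.ext ?_ ?_) <;> simp only [widen, NNReal.coe_add] <;> ring

theorem mem_widen_set {δ : ℝ≥0} {I : RInt} {s t : ℝ} (hs : s ∈ I.set) (h : |t - s| ≤ δ) :
    t ∈ (widen δ I).set := by
  obtain ⟨h₁, h₂⟩ := abs_le.1 h
  exact ⟨by simp only [widen]; linarith [hs.1], by simp only [widen]; linarith [hs.2]⟩

end RInt

section Reeb

variable {X : Type u} [TopologicalSpace X]

theorem ReebRel.equivalence (f : X → ℝ) : Equivalence (ReebRel f) where
  refl x := mem_connectedComponentIn rfl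
  symm {x y} h := by
    show x ∈ connectedComponentIn (f ⁻¹' {f y}) y
    rw [← h.apply_eq, ← connectedComponentIn_eq h]
    exact mem_connectedComponentIn rfl
  trans {x y z} hxy hyz := by
    show z ∈ connectedComponentIn (f ⁻¹' {f x}) x
    rwa [connectedComponentIn_eq hxy, hxy.apply_eq]

def reebQuotRestrict (f : X → ℝ) (U : Set ℝ) : f ⁻¹' U → reebTilde f ⁻¹' U :=
  (reebTilde f ⁻¹' U).restrictPreimage (Quot.mk (ReebRel f))

theorem isQuotientMap_reebQuotRestrict {f : X → ℝ} (hf : Continuous f) {U : Set ℝ}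
    (hU : IsOpen U) : IsQuotientMap (reebQuotRestrict f U) :=
  isQuotientMap_quot_mk.restrictPreimage_isOpen (hU.preimage (continuous_quot_lift _ hf))

theorem isConnected_reebQuotRestrict_fiber (f : X → ℝ) (U : Set ℝ)
    (y : reebTilde f ⁻¹' U) : IsConnected (reebQuotRestrict f U ⁻¹' {y}) := by
  obtain ⟨z, hz⟩ := y
  obtain ⟨x, rfl⟩ := Quot.exists_rep z
  set C := connectedComponentIn (f ⁻¹' {f x}) x
  have hCU : C ⊆ f ⁻¹' U := (connectedComponentIn_subset _ _).trans
    (preimage_mono (singleton_subset_iff.2 hz))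
  have hfiber : reebQuotRestrict f U ⁻¹' {⟨Quot.mk _ x, hz⟩} = Subtype.val ⁻¹' C := by
    ext ⟨w, hw⟩
    show (⟨Quot.mk _ w, hw⟩ : reebTilde f ⁻¹' U) = ⟨Quot.mk _ x, hz⟩ ↔ ReebRel f x w
    exact Subtype.ext_iff.trans (eq_comm.trans ((ReebRel.equivalence f).quot_mk_eq_iff x w))
  rw [hfiber]
  exact ⟨⟨⟨x, hz⟩, mem_connectedComponentIn rfl⟩,
    isPreconnected_connectedComponentIn.preimage_subtypeVal hCU⟩

noncomputable def reebPrecosheafIsoReebTilde {f : X → ℝ} (hf : Continuous f) :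
    reebPrecosheaf f ≅ reebPrecosheaf (reebTilde f) :=
  NatIso.ofComponents
    (fun I => (Equiv.ofBijective _
      ((isQuotientMap_reebQuotRestrict hf isOpen_Ioo).isCoinducing.connectedComponentsMap_bijective
        (isConnected_reebQuotRestrict_fiber f I.set))).toIso)
    (fun _ => by
      ext c
      obtain ⟨x, rfl⟩ := ConnectedComponents.surjective_coe c
      rfl)

end Reeb

theorem IsInterleaving.of_iso {A : Type*} [Category A] {δ : ℝ≥0} {C C' D D' : RInt ⥤ A}
    (eC : C ≅ C') (eD : D ≅ D') (h : IsInterleaving δ C D) : IsInterleaving δ C' D' := by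
  obtain ⟨Φ, Ψ, h1, h2⟩ := h
  refine ⟨eC.inv ≫ Φ ≫ Functor.whiskerLeft (widenFunctor δ) eD.hom,
      eD.inv ≫ Ψ ≫ Functor.whiskerLeft (widenFunctor δ) eC.hom, fun I => ?_, fun I => ?_⟩
  · simp only [NatTrans.comp_app, Functor.whiskerLeft_app, Category.assoc, Iso.hom_inv_id_app_assoc]
    rw [reassoc_of% (h1 I)]
    exact NatIso.naturality_1 eC _
  · simp only [NatTrans.comp_app, Functor.whiskerLeft_app, Category.assoc, Iso.hom_inv_id_app_assoc]
    rw [reassoc_of% (h2 I)]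
    exact NatIso.naturality_1 eD _

section Interleaving

variable {X Z : Type u} [TopologicalSpace X] [TopologicalSpace Z] {f : X → ℝ} {k : Z → ℝ}
  {δ : ℝ≥0}

noncomputable def reebPrecosheafHom {φ : X → Z} (hφ : Continuous φ)
    (hφδ : ∀ x, |k (φ x) - f x| ≤ δ) :
    reebPrecosheaf f ⟶ widenFunctor δ ⋙ reebPrecosheaf k where
  app I := TypeCat.ofHom
    (hφ.restrict (s := f ⁻¹' I.set) (t := k ⁻¹' (RInt.widen δ I).set)
      fun x hx => RInt.mem_widen_set hx (hφδ x)).connectedComponentsMap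
  naturality _ _ _ := by
    ext c
    obtain ⟨x, rfl⟩ := ConnectedComponents.surjective_coe c
    rfl

theorem reebPrecosheafHom_comp_app {φ : X → Z} {ψ : Z → X} (hφ : Continuous φ)
    (hψ : Continuous ψ) (hφδ : ∀ x, |k (φ x) - f x| ≤ δ) (hψδ : ∀ z, |f (ψ z) - k z| ≤ δ)
    (hconn : ∀ x, ∃ S : Set X, IsPreconnected S ∧ x ∈ S ∧ ψ (φ x) ∈ S ∧
      ∀ y ∈ S, |f y - f x| ≤ δ + δ) (I : RInt) :
    (reebPrecosheafHom hφ hφδ).app I ≫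
        (reebPrecosheafHom hψ hψδ).app ((widenFunctor δ).obj I) =
      (reebPrecosheaf f).map
        (homOfLE ((RInt.le_widen δ I).trans (RInt.le_widen δ (RInt.widen δ I)))) := by
  ext c
  obtain ⟨x, rfl⟩ := ConnectedComponents.surjective_coe c
  obtain ⟨S, hS, hxS, hφψS, hSδ⟩ := hconn x
  have hSF : S ⊆ f ⁻¹' (RInt.widen δ (RInt.widen δ I)).set := fun y hy => by
    rw [mem_preimage, RInt.widen_widen]
    exact RInt.mem_widen_set x.2 (by exact_mod_cast hSδ y hy)
  change ConnectedComponents.mk _ = ConnectedComponents.mk _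
  exact ConnectedComponents.mk_eq_mk_of_isPreconnected hS hSF hφψS hxS

theorem isInterleaving_reebPrecosheaf_of_maps {φ : X → Z} {ψ : Z → X} (hφ : Continuous φ)
    (hψ : Continuous ψ) (hφδ : ∀ x, |k (φ x) - f x| ≤ δ) (hψδ : ∀ z, |f (ψ z) - k z| ≤ δ)
    (hX : ∀ x, ∃ S : Set X, IsPreconnected S ∧ x ∈ S ∧ ψ (φ x) ∈ S ∧
      ∀ y ∈ S, |f y - f x| ≤ δ + δ)
    (hZ : ∀ z, ∃ S : Set Z, IsPreconnected S ∧ z ∈ S ∧ φ (ψ z) ∈ S ∧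
      ∀ y ∈ S, |k y - k z| ≤ δ + δ) :
    IsInterleaving δ (reebPrecosheaf f) (reebPrecosheaf k) :=
  ⟨reebPrecosheafHom hφ hφδ, reebPrecosheafHom hψ hψδ,
    reebPrecosheafHom_comp_app hφ hψ hφδ hψδ hX, reebPrecosheafHom_comp_app hψ hφ hψδ hφδ hZ⟩

end Interleaving

theorem isInterleaving_reebPrecosheaf_of_deformationRetract {Y : Type u} [TopologicalSpace Y]
    (A : Set Y) {g : Y → ℝ} {H : Y × unitInterval → Y} (hH : Continuous H)
    (h0 : ∀ y, H (y, 0) = y) (h1mem : ∀ y, H (y, 1) ∈ A) (h1fix : ∀ x ∈ A, H (x, 1) = x)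
    (hpath : ∀ y t, H (H (y, t), 1) = H (y, 1)) {δ : ℝ≥0}
    (hδ : ∀ y, |g y - g (H (y, 1))| ≤ δ) :
    IsInterleaving δ (reebPrecosheaf g) (reebPrecosheaf (fun a : A => g a)) := by
  have hH1 : Continuous fun y => H (y, 1) := hH.comp (continuous_id.prodMk continuous_const)
  refine isInterleaving_reebPrecosheaf_of_maps (φ := fun y => ⟨H (y, 1), h1mem y⟩)
    (hH1.subtype_mk _) continuous_subtype_val (fun y => by rw [abs_sub_comm]; exact hδ y)
    (fun a => by simp) (fun y => ?_) (fun a => ⟨{a}, isPreconnected_singleton, rfl,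
      Subtype.ext (h1fix a a.2), fun b hb => by simp [mem_singleton_iff.1 hb]⟩)
  refine ⟨range fun t => H (y, t), isPreconnected_range (by fun_prop), ⟨0, h0 y⟩, ⟨1, rfl⟩, ?_⟩
  rintro _ ⟨t, rfl⟩
  calc |g (H (y, t)) - g y|
      ≤ |g (H (y, t)) - g (H (y, 1))| + |g (H (y, 1)) - g y| := abs_sub_le _ _ _
    _ ≤ δ + δ := by
      gcongr
      · simpa only [hpath] using hδ (H (y, t))
      · rw [abs_sub_comm]; exact hδ y

theorem stmt18 {Y : Type u} [TopologicalSpace Y] (A : Set Y) (g : Y → ℝ)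
    (hg : Continuous g) (H : Y × unitInterval → Y) (hH : Continuous H)
    (h0 : ∀ y, H (y, 0) = y) (h1mem : ∀ y, H (y, 1) ∈ A)
    (h1fix : ∀ x ∈ A, H (x, 1) = x)
    (hpath : ∀ y t, H (H (y, t), 1) = H (y, 1)) :
    interleavingDist (reebPrecosheaf (reebTilde g))
        (reebPrecosheaf (reebTilde (fun a : A => g a))) ≤
      ⨆ y : Y, ENNReal.ofReal |g y - g (H (y, 1))| := by
  set S := ⨆ y : Y, ENNReal.ofReal |g y - g (H (y, 1))|
  rcases eq_or_ne S ⊤ with hS | hS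
  · exact hS ▸ le_top
  have hδ : ∀ y, |g y - g (H (y, 1))| ≤ S.toNNReal := fun y =>
    (ENNReal.ofReal_le_iff_le_toReal hS).1 (le_iSup (fun y => ENNReal.ofReal _) y)
  have hint := (isInterleaving_reebPrecosheaf_of_deformationRetract A hH h0 h1mem h1fix hpath
    hδ).of_iso (reebPrecosheafIsoReebTilde hg) (reebPrecosheafIsoReebTilde (hg.comp continuous_subtype_val))
  calc interleavingDist _ _ ≤ S.toNNReal := iInf₂_le S.toNNReal hint
    _ = S := ENNReal.coe_toNNReal hS
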